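/- Let f⃗ = (f_Σ, f_Ω) be the vector field of the system and let B(Σ,Ω) = Ω_V^{-1} Ω^{-3/2}. Then for γ ∈ (0,2), on the interior state space, div(B·f⃗) = -(3/2)(2-γ)·Ω_V^{-1}Ω^{-3/2} < 0. Hence B is a Dulac function and the system has no periodic orbits in the interior state space. -/

import Mathlib

/-!
The divergence identity is a direct computation. Instead of Dulac's criterion (which needs Green's
theorem), periodic orbits are excluded by a function that is monotone along every interior solution:
on a periodic solution it must be constant, so its rate of change vanishes identically.
If `λ ≤ √(3/2) γ`, the function `log (Ω_V / Ω)` grows at the rate `3γ - √6 λ Σ > 0`, so there is no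
periodic solution at all. Otherwise `lyapunov` decreases at the rate
`λ (2 - γ) (3γ - √6 λ Σ)² / (λ - √(3/2) γ Σ)`; its vanishing forces `Σ ≡ 3γ / (√6 λ)`, and then
`f_Σ = 0`, which is affine in `Ω` with nonzero slope, pins `Ω` too.
-/

/-- The `Σ`-component of the vector field. -/
noncomputable def fS (lam gam s w : ℝ) : ℝ :=
  -(2 - (-1 + 3 * s ^ 2 + 3 / 2 * gam * w)) * s + Real.sqrt (3 / 2) * lam * (1 - s ^ 2 - w)

/-- The `Ω`-component of the vector field. -/
noncomputable def fO (gam s w : ℝ) : ℝ :=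
  (2 * (1 + (-1 + 3 * s ^ 2 + 3 / 2 * gam * w)) - 3 * gam) * w

/-- The Dulac function `B = Ω_V⁻¹ Ω^{-3/2}`. -/
noncomputable def B (s w : ℝ) : ℝ := (1 - s ^ 2 - w)⁻¹ * w ^ (-(3 : ℝ) / 2)

open Function Real

theorem Function.Periodic.eq_of_antitone {α β : Type*} [AddCommGroup α] [LinearOrder α]
    [IsOrderedAddMonoid α] [Archimedean α] [PartialOrder β] {f : α → β} {c : α}
    (hf : Periodic f c) (hc : 0 < c) (ha : Antitone f) (x y : α) : f x = f y := by
  obtain ⟨z, hz, hxz⟩ := hf.exists_mem_Ico hc x y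
  obtain ⟨z', hz', hyz'⟩ := hf.exists_mem_Ico hc y x
  exact le_antisymm (hxz ▸ ha hz.1) (hyz' ▸ ha hz'.1)

theorem Function.Periodic.hasDerivAt_eq_zero_of_nonpos {f f' : ℝ → ℝ} {c : ℝ}
    (hf : Periodic f c) (hc : 0 < c) (hd : ∀ x, HasDerivAt f (f' x) x) (hle : f' ≤ 0) (x : ℝ) :
    f' x = 0 := by
  have hconst : f = fun _ => f x :=
    funext fun y => hf.eq_of_antitone hc (antitone_of_hasDerivAt_nonpos hd hle) y x
  exact (hd x).unique (hconst ▸ hasDerivAt_const x (f x))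

theorem hasDerivAt_B_left {s w : ℝ} (hV : 1 - s ^ 2 - w ≠ 0) :
    HasDerivAt (fun x => B x w) (2 * s / (1 - s ^ 2 - w) ^ 2 * w ^ (-(3 : ℝ) / 2)) s := by
  have h : HasDerivAt (fun x => B x w) _ s :=
    ((((hasDerivAt_pow 2 s).const_sub 1).sub_const w).inv hV).mul_const (w ^ (-(3 : ℝ) / 2))
  exact h.congr_deriv (by norm_num)

theorem hasDerivAt_B_right {s w : ℝ} (hV : 1 - s ^ 2 - w ≠ 0) (hw : 0 < w) :
    HasDerivAt (fun y => B s y) (w ^ (-(3 : ℝ) / 2) / (1 - s ^ 2 - w) ^ 2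
      - 3 / 2 * (1 - s ^ 2 - w)⁻¹ * w ^ (-(3 : ℝ) / 2 - 1)) w := by
  have h : HasDerivAt (fun y => B s y) _ w :=
    (((hasDerivAt_id' w).const_sub (1 - s ^ 2)).inv hV).fun_mul
      (hasDerivAt_rpow_const (p := -(3 : ℝ) / 2) (Or.inl hw.ne'))
  exact h.congr_deriv (by simp only [Pi.inv_apply]; ring)

theorem hasDerivAt_fS_left (lam gam s w : ℝ) :
    HasDerivAt (fun x => fS lam gam x w)
      (9 * s ^ 2 + 3 / 2 * gam * w - 3 - 2 * √(3 / 2) * lam * s) s := by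
  have hpoly : (fun x => fS lam gam x w) = fun x => 3 * x ^ 3 + (3 / 2 * gam * w - 3) * x
      - √(3 / 2) * lam * x ^ 2 + √(3 / 2) * lam * (1 - w) := by
    ext x; simp only [fS]; ring
  rw [hpoly]
  exact (((((hasDerivAt_pow 3 s).const_mul 3).fun_add
    ((hasDerivAt_id' s).const_mul (3 / 2 * gam * w - 3))).fun_sub
    ((hasDerivAt_pow 2 s).const_mul (√(3 / 2) * lam))).add_const _).congr_deriv
    (by norm_num; ring)

theorem hasDerivAt_fO_right (gam s w : ℝ) :
    HasDerivAt (fun y => fO gam s y) (6 * s ^ 2 + 6 * gam * w - 3 * gam) w := by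
  have hpoly : (fun y => fO gam s y) = fun y => 3 * gam * y ^ 2 + (6 * s ^ 2 - 3 * gam) * y := by
    ext y; simp only [fO]; ring
  rw [hpoly]
  exact (((hasDerivAt_pow 2 w).const_mul (3 * gam)).fun_add
    ((hasDerivAt_id' w).const_mul (6 * s ^ 2 - 3 * gam))).congr_deriv (by norm_num; ring)

theorem B_pos {s w : ℝ} (h : s ^ 2 + w < 1) (hw : 0 < w) : 0 < B s w :=
  mul_pos (inv_pos.2 (by linarith)) (rpow_pos_of_pos hw _)

theorem divergence_B_mul_eq (lam gam : ℝ) {s w : ℝ} (h : s ^ 2 + w < 1) (hw : 0 < w) :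
    deriv (fun x => B x w * fS lam gam x w) s + deriv (fun y => B s y * fO gam s y) w
      = -(3 / 2) * (2 - gam) * B s w := by
  have hV : 1 - s ^ 2 - w ≠ 0 := by linarith
  rw [((hasDerivAt_B_left hV).fun_mul (hasDerivAt_fS_left lam gam s w)).deriv,
    ((hasDerivAt_B_right hV hw).fun_mul (hasDerivAt_fO_right gam s w)).deriv,
    rpow_sub_one hw.ne']
  simp only [B, fS, fO]
  field_simp
  ring

theorem neg_two_mul_fS_sub_fO (lam gam s w : ℝ) :
    -(2 * s * fS lam gam s w) - fO gam s w
      = (6 * s ^ 2 + 3 * gam * w - 2 * √(3 / 2) * lam * s) * (1 - s ^ 2 - w) := by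
  unfold fS fO; ring

theorem fO_eq (gam s w : ℝ) : fO gam s w = (6 * s ^ 2 + 3 * gam * w - 3 * gam) * w := by
  unfold fO; ring

theorem eq_of_fS_eq_zero {lam gam s w w' : ℝ} (hg : 0 < gam) (hs : s ^ 2 < 1)
    (hscaling : 2 * √(3 / 2) * lam * s = 3 * gam) (hw : fS lam gam s w = 0)
    (hw' : fS lam gam s w' = 0) : w = w' := by
  have hslope : 3 / 2 * gam * s - √(3 / 2) * lam ≠ 0 := by
    intro h0
    nlinarith [show 3 * gam * s ^ 2 = 3 * gam by linear_combination 2 * s * h0 + hscaling]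
  have hdiff : (3 / 2 * gam * s - √(3 / 2) * lam) * (w - w') = 0 := by
    unfold fS at hw hw'; linear_combination hw - hw'
  linarith [(mul_eq_zero.mp hdiff).resolve_left hslope]

structure IsInteriorSolution (lam gam : ℝ) (S O : ℝ → ℝ) : Prop where
  hasDerivAt_S : ∀ N, HasDerivAt S (fS lam gam (S N) (O N)) N
  hasDerivAt_O : ∀ N, HasDerivAt O (fO gam (S N) (O N)) N
  mem : ∀ N, S N ^ 2 + O N < 1 ∧ 0 < O N

noncomputable def lyapunov (lam gam s w : ℝ) : ℝ :=
  -(3 * gam * (2 - gam)) * log (1 - s ^ 2 - w) + (6 * gam - 2 * lam ^ 2) * log w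
    + 2 * (2 * lam ^ 2 - 3 * gam ^ 2) * log (lam - √(3 / 2) * gam * s)

theorem lyapunov_rate_eq (lam gam s w : ℝ) (hk : lam - √(3 / 2) * gam * s ≠ 0) :
    -(3 * gam * (2 - gam)) * (6 * s ^ 2 + 3 * gam * w - 2 * √(3 / 2) * lam * s)
      + (6 * gam - 2 * lam ^ 2) * (6 * s ^ 2 + 3 * gam * w - 3 * gam)
      + 2 * (2 * lam ^ 2 - 3 * gam ^ 2)
        * (-(√(3 / 2) * gam * fS lam gam s w) / (lam - √(3 / 2) * gam * s))
      = -(lam * (2 - gam) * (3 * gam - 2 * √(3 / 2) * lam * s) ^ 2)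
        / (lam - √(3 / 2) * gam * s) := by
  have hR : √(3 / 2) ^ 2 = 3 / 2 := sq_sqrt (by norm_num)
  rw [eq_div_iff hk, add_mul, mul_assoc _ (_ / _), div_mul_cancel₀ _ hk]
  unfold fS
  linear_combination (-6 * gam ^ 2 * (2 - gam) * lam * s ^ 2
    - 2 * (2 * lam ^ 2 - 3 * gam ^ 2) * gam * lam * (1 - s ^ 2 - w)
    + 4 * lam ^ 3 * (2 - gam) * s ^ 2) * hR

namespace IsInteriorSolution

variable {lam gam : ℝ} {S O : ℝ → ℝ}

theorem omegaV_pos (h : IsInteriorSolution lam gam S O) (N : ℝ) : 0 < 1 - S N ^ 2 - O N := by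
  linarith [h.mem N]

theorem abs_S_lt_one (h : IsInteriorSolution lam gam S O) (N : ℝ) : |S N| < 1 :=
  sq_lt_one_iff_abs_lt_one _ |>.mp (by linarith [h.mem N])

theorem hasDerivAt_log_omegaV (h : IsInteriorSolution lam gam S O) (N : ℝ) :
    HasDerivAt (fun n => log (1 - S n ^ 2 - O n))
      (6 * S N ^ 2 + 3 * gam * O N - 2 * √(3 / 2) * lam * S N) N := by
  have hV := ((((h.hasDerivAt_S N).fun_pow 2).const_sub 1).fun_sub (h.hasDerivAt_O N)).log
    (h.omegaV_pos N).ne'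
  refine hV.congr_deriv ?_
  rw [div_eq_iff (h.omegaV_pos N).ne', ← neg_two_mul_fS_sub_fO]
  push_cast
  ring

theorem hasDerivAt_log_O (h : IsInteriorSolution lam gam S O) (N : ℝ) :
    HasDerivAt (fun n => log (O n)) (6 * S N ^ 2 + 3 * gam * O N - 3 * gam) N := by
  refine ((h.hasDerivAt_O N).log (h.mem N).2.ne').congr_deriv ?_
  rw [fO_eq, mul_div_cancel_right₀ _ (h.mem N).2.ne']

theorem hasDerivAt_log_omegaV_sub_log_O (h : IsInteriorSolution lam gam S O) (N : ℝ) :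
    HasDerivAt (fun n => log (1 - S n ^ 2 - O n) - log (O n))
      (3 * gam - 2 * √(3 / 2) * lam * S N) N :=
  ((h.hasDerivAt_log_omegaV N).fun_sub (h.hasDerivAt_log_O N)).congr_deriv (by ring)

theorem false_of_periodic_of_le (h : IsInteriorSolution lam gam S O) (hl : 0 ≤ lam)
    (hg : 0 < gam) (hle : lam ≤ √(3 / 2) * gam) {T : ℝ} (hT : 0 < T) (hS : Periodic S T)
    (hO : Periodic O T) : False := by
  have hR : √(3 / 2) * √(3 / 2) = 3 / 2 := mul_self_sqrt (by norm_num)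
  have hp : 0 ≤ √(3 / 2) * lam := mul_nonneg (sqrt_nonneg _) hl
  have hp' : 2 * (√(3 / 2) * lam) ≤ 3 * gam := by
    nlinarith [mul_le_mul_of_nonneg_left hle (sqrt_nonneg (3 / 2))]
  have hrate : ∀ N, 0 < 3 * gam - 2 * √(3 / 2) * lam * S N := fun N => by
    obtain ⟨h₁, h₂⟩ := abs_lt.mp (h.abs_S_lt_one N)
    -- 3γ - 2pS = (3γ - 2p)(1 + S)/2 + (3γ + 2p)(1 - S)/2 with p = √(3/2) λ
    nlinarith [mul_nonneg (sub_nonneg.mpr hp') (by linarith : (0 : ℝ) ≤ 1 + S N),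
      mul_pos (by linarith : 0 < 3 * gam + 2 * (√(3 / 2) * lam)) (by linarith : 0 < 1 - S N)]
  have hper : Periodic (fun n => -(log (1 - S n ^ 2 - O n) - log (O n))) T :=
    fun n => by simp only [hS n, hO n]
  have hzero := hper.hasDerivAt_eq_zero_of_nonpos hT
    (fun N => (h.hasDerivAt_log_omegaV_sub_log_O N).neg) (fun N => neg_nonpos.mpr (hrate N).le) 0
  linarith [hrate 0]

theorem lam_sub_pos (h : IsInteriorSolution lam gam S O) (hg : 0 < gam)
    (hlt : √(3 / 2) * gam < lam) (N : ℝ) : 0 < lam - √(3 / 2) * gam * S N := by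
  have hS := (abs_lt.mp (h.abs_S_lt_one N)).2
  nlinarith [mul_pos (sqrt_pos.mpr (by norm_num : (0 : ℝ) < 3 / 2)) hg]

theorem hasDerivAt_lyapunov (h : IsInteriorSolution lam gam S O) (hg : 0 < gam)
    (hlt : √(3 / 2) * gam < lam) (N : ℝ) :
    HasDerivAt (fun n => lyapunov lam gam (S n) (O n))
      (-(lam * (2 - gam) * (3 * gam - 2 * √(3 / 2) * lam * S N) ^ 2)
        / (lam - √(3 / 2) * gam * S N)) N := by
  have hk := h.lam_sub_pos hg hlt N
  have hlogk : HasDerivAt (fun n => log (lam - √(3 / 2) * gam * S n))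
      (-(√(3 / 2) * gam * fS lam gam (S N) (O N)) / (lam - √(3 / 2) * gam * S N)) N :=
    (((h.hasDerivAt_S N).const_mul _).const_sub lam).log hk.ne' |>.congr_deriv (by ring)
  exact ((((h.hasDerivAt_log_omegaV N).const_mul _).fun_add
    ((h.hasDerivAt_log_O N).const_mul _)).fun_add (hlogk.const_mul _)).congr_deriv
    (lyapunov_rate_eq lam gam (S N) (O N) hk.ne')

theorem eq_const_of_periodic (h : IsInteriorSolution lam gam S O) (hg : 0 < gam)
    (hg2 : gam < 2) (hlt : √(3 / 2) * gam < lam) {T : ℝ} (hT : 0 < T) (hS : Periodic S T)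
    (hO : Periodic O T) (N : ℝ) : S N = S 0 ∧ O N = O 0 := by
  have hR : 0 < √(3 / 2) := sqrt_pos.mpr (by norm_num)
  have hlam : 0 < lam := (mul_pos hR hg).trans hlt
  have hper : Periodic (fun n => lyapunov lam gam (S n) (O n)) T :=
    fun n => by simp only [hS n, hO n]
  have hzero := hper.hasDerivAt_eq_zero_of_nonpos hT (h.hasDerivAt_lyapunov hg hlt)
    (fun n => div_nonpos_of_nonpos_of_nonneg
      (neg_nonpos.mpr (by have := sub_pos.mpr hg2; positivity)) (h.lam_sub_pos hg hlt n).le)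
  have hscaling : ∀ n, 2 * √(3 / 2) * lam * S n = 3 * gam := fun n => by
    have hsq := neg_eq_zero.mp <|
      (div_eq_zero_iff.mp (hzero n)).resolve_right (h.lam_sub_pos hg hlt n).ne'
    have hne : lam * (2 - gam) ≠ 0 := (mul_pos hlam (sub_pos.mpr hg2)).ne'
    linarith [pow_eq_zero_iff two_ne_zero |>.mp ((mul_eq_zero.mp hsq).resolve_left hne)]
  have hSconst : ∀ n, S n = S 0 := fun n =>
    mul_left_cancel₀ (by positivity : 2 * √(3 / 2) * lam ≠ 0)
      ((hscaling n).trans (hscaling 0).symm)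
  have hfS : ∀ n, fS lam gam (S 0) (O n) = 0 := fun n => by
    have hS' : HasDerivAt S 0 n := (funext hSconst : S = fun _ => S 0) ▸ hasDerivAt_const n (S 0)
    simpa [hSconst n] using (h.hasDerivAt_S n).unique hS'
  have hS0 : S 0 ^ 2 < 1 := by linarith [h.mem 0]
  exact ⟨hSconst N, eq_of_fS_eq_zero hg hS0 (hscaling 0) (hfS N) (hfS 0)⟩

end IsInteriorSolution

theorem stmt_12 (lam gam : ℝ) (hl : 0 ≤ lam) (hg : 0 < gam) (hg2 : gam < 2) :
    (∀ s w : ℝ, s ^ 2 + w < 1 → 0 < w →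
      (deriv (fun x => B x w * fS lam gam x w) s + deriv (fun y => B s y * fO gam s y) w
          = -(3 / 2) * (2 - gam) * ((1 - s ^ 2 - w)⁻¹ * w ^ (-(3 : ℝ) / 2)) ∧
        deriv (fun x => B x w * fS lam gam x w) s + deriv (fun y => B s y * fO gam s y) w
          < 0)) ∧
    (∀ S O : ℝ → ℝ,
      (∀ N, HasDerivAt S (fS lam gam (S N) (O N)) N) →
      (∀ N, HasDerivAt O (fO gam (S N) (O N)) N) →
      (∀ N, S N ^ 2 + O N < 1 ∧ 0 < O N) →
      ∀ T : ℝ, 0 < T → (∀ N, S (N + T) = S N ∧ O (N + T) = O N) →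
      ∀ N, S N = S 0 ∧ O N = O 0) := by
  refine ⟨fun s w h hw => ?_, fun S O hS hO hin T hT hper N => ?_⟩
  · have hdiv := divergence_B_mul_eq lam gam h hw
    refine ⟨hdiv, ?_⟩
    rw [hdiv]
    exact mul_neg_of_neg_of_pos (by linarith) (B_pos h hw)
  · have hsol : IsInteriorSolution lam gam S O := ⟨hS, hO, hin⟩
    have hpS : Periodic S T := fun n => (hper n).1
    have hpO : Periodic O T := fun n => (hper n).2
    rcases le_or_gt lam (√(3 / 2) * gam) with hle | hlt
    · exact (hsol.false_of_periodic_of_le hl hg hle hT hpS hpO).elim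
    · exact hsol.eq_const_of_periodic hg hg2 hlt hT hpS hpO N
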